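/- arXiv:cs/0304012 — 6 statements merged into one kernel-verified Lean document; each statement's English description precedes it below -/
import Mathlib

section
/- Let n be a natural number and let X and Y be finite sets (Finsets) of vectors in Fin n → ZMod 2 such that for every x ∈ X and every y ∈ Y the inner product ∑ i, x i * y i equals 0 in ZMod 2. Then X.card * Y.card ≤ 2^n. -/
/-!
`span X` and `span Y` are orthogonal for the dot product, so the dot product maps `span Y`
injectively into the annihilator of `span X`, giving `dim span X + dim span Y ≤ n`; over a field
with `q` elements a subspace of dimension `d` has `q ^ d` elements.
-/

open Module Submodule

variable {K : Type*} [Field K]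

theorem Finset.card_le_natCard_pow_finrank_span [Finite K] {V : Type*} [AddCommGroup V]
    [Module K V] (s : Finset V) :
    s.card ≤ Nat.card K ^ finrank K (span K (s : Set V)) := by
  rw [← Module.natCard_eq_pow_finrank, ← Nat.card_eq_finsetCard]
  have : Finite (span K (s : Set V)) := Module.finite_of_finite K
  exact Nat.card_mono (Set.toFinite _) subset_span

theorem finrank_span_add_finrank_span_le_of_dotProduct_eq_zero {ι : Type*} [Fintype ι]
    {s t : Set (ι → K)} (hst : ∀ x ∈ s, ∀ y ∈ t, x ⬝ᵥ y = 0) :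
    finrank K (span K s) + finrank K (span K t) ≤ Fintype.card ι := by
  classical
  let e := dotProductEquiv K ι
  have hmap : (span K t).map e.toLinearMap ≤ (span K s).dualAnnihilator := by
    rw [map_span, span_le]
    rintro _ ⟨y, hy, rfl⟩
    have hs : span K s ≤ LinearMap.ker (e y) := by
      rw [span_le]
      intro x hx
      simp [e, dotProduct_comm y, hst x hx y hy]
    exact (mem_dualAnnihilator _).2 fun x hx ↦ hs hx
  calc finrank K (span K s) + finrank K (span K t)
      = finrank K (span K s) + finrank K ((span K t).map e.toLinearMap) := by
        rw [LinearEquiv.finrank_map_eq]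
    _ ≤ finrank K (span K s) + finrank K (span K s).dualAnnihilator := by
        gcongr; exact finrank_mono hmap
    _ = Fintype.card ι := by
        rw [Subspace.finrank_add_finrank_dualAnnihilator_eq, finrank_fintype_fun_eq_card]

theorem Finset.card_mul_card_le_of_dotProduct_eq_zero [Finite K] {ι : Type*} [Fintype ι]
    (X Y : Finset (ι → K)) (h : ∀ x ∈ X, ∀ y ∈ Y, x ⬝ᵥ y = 0) :
    X.card * Y.card ≤ Nat.card K ^ Fintype.card ι :=
  calc X.card * Y.card
      ≤ Nat.card K ^ finrank K (span K (X : Set (ι → K)))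
        * Nat.card K ^ finrank K (span K (Y : Set (ι → K))) :=
        Nat.mul_le_mul X.card_le_natCard_pow_finrank_span Y.card_le_natCard_pow_finrank_span
    _ ≤ Nat.card K ^ Fintype.card ι := by
        rw [← pow_add]
        exact Nat.pow_le_pow_right Nat.card_pos
          (finrank_span_add_finrank_span_le_of_dotProduct_eq_zero h)

theorem zero_monochromatic_rectangle_card_le
    (n : ℕ) (X Y : Finset (Fin n → ZMod 2))
    (h : ∀ x ∈ X, ∀ y ∈ Y, ∑ i, x i * y i = (0 : ZMod 2)) :
    X.card * Y.card ≤ 2 ^ n := by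
  simpa only [Nat.card_zmod, Fintype.card_fin] using
    Finset.card_mul_card_le_of_dotProduct_eq_zero X Y h
end

section
/- Let n be a natural number and let X and Y be finite sets (Finsets) of vectors in Fin n → ZMod 2 such that for every x ∈ X and every y ∈ Y the inner product ∑ i, x i * y i equals 1 in ZMod 2. Then X.card * Y.card ≤ 2^n. -/
/-!
For a nondegenerate bilinear form on a finite vector space `V`, `|W| * |W^⊥| = |V|`. If `B x y = c`
on `X × Y`, then translating `Y` by `-y₀` for some `y₀ ∈ Y` puts it inside `(span X)^⊥`, while `X`
lies in `span X`.
-/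

open Finset

namespace LinearMap.BilinForm

variable {K V : Type*} [Field K] [AddCommGroup V] [Module K V] [FiniteDimensional K V]
  {B : LinearMap.BilinForm K V}

theorem natCard_mul_natCard_orthogonal (hB : B.Nondegenerate) (W : Submodule K V) :
    Nat.card W * Nat.card (B.orthogonal W) = Nat.card V := by
  rw [Module.natCard_eq_pow_finrank (K := K) (V := W),
    Module.natCard_eq_pow_finrank (K := K) (V := B.orthogonal W),
    Module.natCard_eq_pow_finrank (K := K) (V := V), finrank_orthogonal hB, ← pow_add,
    Nat.add_sub_cancel' W.finrank_le]

variable [Finite K]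

theorem card_mul_card_le_of_forall_eq_zero (hB : B.Nondegenerate) {X Y : Finset V}
    (h : ∀ x ∈ X, ∀ y ∈ Y, B x y = 0) : #X * #Y ≤ Nat.card V := by
  have : Finite V := Module.finite_of_finite K
  set W := Submodule.span K (X : Set V)
  have hX : (X : Set V) ⊆ W := Submodule.subset_span
  have hY : (Y : Set V) ⊆ B.orthogonal W := fun y hy =>
    Submodule.span_le (p := LinearMap.ker (B.flip y)) |>.mpr fun x hx => h x hx y hy
  rw [← natCard_mul_natCard_orthogonal hB W]
  gcongr
  · simpa using Nat.card_mono (Set.toFinite _) hX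
  · simpa using Nat.card_mono (Set.toFinite _) hY

theorem card_mul_card_le_of_forall_eq (hB : B.Nondegenerate) {X Y : Finset V} (c : K)
    (h : ∀ x ∈ X, ∀ y ∈ Y, B x y = c) : #X * #Y ≤ Nat.card V := by
  classical
  rcases Y.eq_empty_or_nonempty with rfl | ⟨y₀, hy₀⟩
  · simp
  rw [← card_image_of_injective Y (sub_left_injective (b := y₀))]
  refine card_mul_card_le_of_forall_eq_zero hB fun x hx _ hy => ?_
  obtain ⟨y, hyY, rfl⟩ := mem_image.mp hy
  rw [map_sub, h x hx y hyY, h x hx y₀ hy₀, sub_self]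

end LinearMap.BilinForm

theorem one_monochromatic_rectangle_card_le
    (n : ℕ) (X Y : Finset (Fin n → ZMod 2))
    (h : ∀ x ∈ X, ∀ y ∈ Y, ∑ i, x i * y i = (1 : ZMod 2)) :
    X.card * Y.card ≤ 2 ^ n := by
  have hB : (Matrix.toBilin' (1 : Matrix (Fin n) (Fin n) (ZMod 2))).Nondegenerate :=
    LinearMap.BilinForm.nondegenerate_toBilin'_of_det_ne_zero' _ (by simp)
  simpa using LinearMap.BilinForm.card_mul_card_le_of_forall_eq hB 1 fun x hx y hy => by
    simpa [Matrix.toBilin'_apply', dotProduct] using h x hx y hy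
end

section
/- Let n and α be natural numbers with α < n, and let 𝒫 be a finite family (Finset) of functions P : (Fin n → Bool) → List Bool such that 𝒫.card < 2^(α+1) and each P ∈ 𝒫 has prefix-free incomparable values: for all y ≠ y' in Fin n → Bool, P y is not a prefix of P y'. Then there exists y : Fin n → Bool such that for every P ∈ 𝒫, the length of P y is at least n − α. -/
/-!
Fix a protocol `P`. Padding the conversations of length at most `m` up to length exactly `m`
is injective, because two of them with equal paddings would be prefix-comparable; so at most
`2 ^ m` inputs have such a short conversation. With `m = n - α - 1`, the fewer than `2 ^ (α + 1)`
protocols rule out fewer than `2 ^ n` inputs in total, and any remaining input works.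
-/

open Finset

theorem List.IsPrefix.of_append_eq_append {α : Type*} {s t u v : List α}
    (h : s ++ u = t ++ v) (hlen : s.length ≤ t.length) : s <+: t :=
  List.prefix_of_prefix_length_le (h ▸ List.prefix_append s u) (List.prefix_append t v) hlen

theorem card_filter_length_le_of_not_prefix {ι α : Type*} [Fintype ι] [Fintype α] [Nonempty α]
    (P : ι → List α) (hP : ∀ y y', y ≠ y' → ¬ P y <+: P y') (m : ℕ) :
    #{y | (P y).length ≤ m} ≤ Fintype.card α ^ m := by
  classical
  obtain ⟨a⟩ := ‹Nonempty α›
  -- `take m` only makes `pad` total; on the inputs counted it does nothing.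
  let pad : ι → List.Vector α m := fun y =>
    ⟨(P y).take m ++ List.replicate (m - (P y).length) a, by simp; omega⟩
  calc #{y | (P y).length ≤ m}
      ≤ #(univ : Finset (List.Vector α m)) := by
        refine card_le_card_of_injOn pad (fun _ _ => mem_univ _) fun y hy y' hy' hpad => ?_
        simp only [coe_filter, mem_univ, true_and, Set.mem_ofPred_eq] at hy hy'
        have hpad' := congrArg Subtype.val hpad
        simp only [pad, List.take_of_length_le hy, List.take_of_length_le hy'] at hpad'
        by_contra hne
        rcases le_total (P y).length (P y').length with hlen | hlen
        · exact hP y y' hne (.of_append_eq_append hpad' hlen)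
        · exact hP y' y (Ne.symm hne) (.of_append_eq_append hpad'.symm hlen)
    _ = Fintype.card α ^ m := by rw [card_univ, card_vector]

theorem exists_forall_notMem_of_card_mul_lt {ι κ : Type*} [Fintype κ] [DecidableEq κ]
    (s : Finset ι) (bad : ι → Finset κ) (k : ℕ) (hbad : ∀ i ∈ s, #(bad i) ≤ k)
    (hlt : #s * k < Fintype.card κ) : ∃ y, ∀ i ∈ s, y ∉ bad i := by
  obtain ⟨y, -, hy⟩ := exists_mem_notMem_of_card_lt_card
    ((card_biUnion_le_card_mul s bad k hbad).trans_lt (hlt.trans_eq card_univ.symm))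
  exact ⟨y, fun i hi hyi => hy (mem_biUnion.2 ⟨i, hi, hyi⟩)⟩

theorem exists_input_with_long_conversations
    (n α : ℕ) (hα : α < n)
    (Ps : Finset ((Fin n → Bool) → List Bool))
    (hcard : Ps.card < 2 ^ (α + 1))
    (hpf : ∀ P ∈ Ps, ∀ y y' : Fin n → Bool, y ≠ y' → ¬ P y <+: P y') :
    ∃ y : Fin n → Bool, ∀ P ∈ Ps, n - α ≤ (P y).length := by
  classical
  have hshort : ∀ P ∈ Ps, #{y | (P y).length ≤ n - α - 1} ≤ 2 ^ (n - α - 1) := fun P hP =>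
    card_filter_length_le_of_not_prefix P (hpf P hP) _
  have hlt : #Ps * 2 ^ (n - α - 1) < Fintype.card (Fin n → Bool) := calc
    #Ps * 2 ^ (n - α - 1) < 2 ^ (α + 1) * 2 ^ (n - α - 1) :=
      Nat.mul_lt_mul_of_pos_right hcard (by positivity)
    _ = Fintype.card (Fin n → Bool) := by
      rw [← pow_add, Fintype.card_fun, Fintype.card_bool, Fintype.card_fin]; congr 1; omega
  obtain ⟨y, hy⟩ := exists_forall_notMem_of_card_mul_lt Ps _ _ hshort hlt
  refine ⟨y, fun P hP => ?_⟩
  have hlong := hy P hP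
  simp only [mem_filter, mem_univ, true_and] at hlong
  omega
end

section
/- Let k and m be natural numbers and let S be a finite set (Finset) of Boolean strings of length k (functions Fin k → Bool) with S.card = m + 1. Then there exists a set I of coordinates (a Finset of Fin k) with I.card ≤ m such that I distinguishes all elements of S: for any two distinct u, v ∈ S there exists i ∈ I with u i ≠ v i. -/
theorem exists_distinguishing_coordinates
    (k m : ℕ) (S : Finset (Fin k → Bool)) (hS : S.card = m + 1) :
    ∃ I : Finset (Fin k), I.card ≤ m ∧
      ∀ u ∈ S, ∀ v ∈ S, u ≠ v → ∃ i ∈ I, u i ≠ v i := by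
  induction m using Nat.strong_induction_on generalizing S with
  | _ m IH =>
  rcases m with _ | m
  · refine ⟨∅, le_refl _, ?_⟩
    intro u hu v hv huv
    exact absurd (Finset.card_le_one.mp hS.le u hu v hv) huv
  · obtain ⟨u, hu, v, hv, huv⟩ := Finset.one_lt_card.mp (show 1 < S.card by omega)
    obtain ⟨i, hi⟩ : ∃ i, u i ≠ v i := by
      by_contra hc
      push_neg at hc
      exact huv (funext hc)
    set S0 := S.filter (fun f => f i = false) with hS0
    set S1 := S.filter (fun f => f i = true) with hS1
    have hsplit : S0.card + S1.card = m + 2 := by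
      have h := Finset.card_filter_add_card_filter_not
        (s := S) (p := fun f => f i = false)
      simpa [hS0, hS1, hS, Bool.not_eq_false] using h
    have h0 : S0.Nonempty := by
      rcases Bool.eq_false_or_eq_true (u i) with h | h
      · exact ⟨v, Finset.mem_filter.mpr ⟨hv,
          Bool.eq_false_iff.mpr (fun hv' => hi (h.trans hv'.symm))⟩⟩
      · exact ⟨u, Finset.mem_filter.mpr ⟨hu, h⟩⟩
    have h1 : S1.Nonempty := by
      rcases Bool.eq_false_or_eq_true (u i) with h | h
      · exact ⟨u, Finset.mem_filter.mpr ⟨hu, h⟩⟩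
      · refine ⟨v, Finset.mem_filter.mpr ⟨hv, ?_⟩⟩
        rcases Bool.eq_false_or_eq_true (v i) with h' | h'
        · exact h'
        · exact absurd (h.trans h'.symm) hi
    have c0 : 1 ≤ S0.card := Finset.card_pos.mpr h0
    have c1 : 1 ≤ S1.card := Finset.card_pos.mpr h1
    obtain ⟨I0, hI0c, hI0⟩ := IH (S0.card - 1) (by omega) S0 (by omega)
    obtain ⟨I1, hI1c, hI1⟩ := IH (S1.card - 1) (by omega) S1 (by omega)
    refine ⟨insert i (I0 ∪ I1), ?_, ?_⟩
    · have hc1 := Finset.card_insert_le i (I0 ∪ I1)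
      have hc2 := Finset.card_union_le I0 I1
      omega
    · intro a ha b hb hab
      have memI0 : ∀ j ∈ I0, j ∈ insert i (I0 ∪ I1) := by
        intro j hj; simp [Finset.mem_insert, Finset.mem_union, hj]
      have memI1 : ∀ j ∈ I1, j ∈ insert i (I0 ∪ I1) := by
        intro j hj; simp [Finset.mem_insert, Finset.mem_union, hj]
      rcases Bool.eq_false_or_eq_true (a i) with ha' | ha' <;>
        rcases Bool.eq_false_or_eq_true (b i) with hb' | hb'
      · obtain ⟨j, hj, hjne⟩ := hI1 a (Finset.mem_filter.mpr ⟨ha, ha'⟩)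
          b (Finset.mem_filter.mpr ⟨hb, hb'⟩) hab
        exact ⟨j, memI1 j hj, hjne⟩
      · exact ⟨i, Finset.mem_insert_self i _, by rw [ha', hb']; simp⟩
      · exact ⟨i, Finset.mem_insert_self i _, by rw [ha', hb']; simp⟩
      · obtain ⟨j, hj, hjne⟩ := hI0 a (Finset.mem_filter.mpr ⟨ha, ha'⟩)
          b (Finset.mem_filter.mpr ⟨hb, hb'⟩) hab
        exact ⟨j, memI0 j hj, hjne⟩
end

section
/- Let n, a, b be natural numbers with 1 ≤ a ≤ 2^n and 1 ≤ b ≤ 2^n. Consider the set of functions f : (Fin n → Bool) × (Fin n → Bool) → Bool for which there exist finite sets X, Y of strings in Fin n → Bool with X.card = a and Y.card = b and a constant c : Bool such that f (x, y) = c for all x ∈ X and y ∈ Y (i.e., f has a monochromatic a × b rectangle). The cardinality of this set of functions is at most 2 * (2^n).choose a * (2^n).choose b * 2^(2^(2*n) − a*b). -/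
open Finset

lemma card_funs_fixed_on {α β : Type*} [Fintype α] [DecidableEq α] [Fintype β]
    [DecidableEq β] (s : Finset α) (g : α → β) :
    (Finset.univ.filter fun f : α → β => ∀ x ∈ s, f x = g x).card =
      Fintype.card β ^ (Fintype.card α - s.card) := by
  have e : {f : α → β // ∀ x ∈ s, f x = g x} ≃ ({x // x ∈ sᶜ} → β) :=
    { toFun := fun f x => f.1 x.1
      invFun := fun h => ⟨fun x => if hx : x ∈ s then g x else h ⟨x, by simpa using hx⟩,
        fun x hx => dif_pos hx⟩
      left_inv := by
        rintro ⟨f, hf⟩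
        ext x
        by_cases hx : x ∈ s <;> simp [hx, hf x]
      right_inv := by
        intro h
        funext x
        have hx : x.1 ∉ s := Finset.mem_compl.mp x.2
        simp [hx] }
  have h1 : (Finset.univ.filter fun f : α → β => ∀ x ∈ s, f x = g x).card =
      Fintype.card {f : α → β // ∀ x ∈ s, f x = g x} := (Fintype.card_subtype _).symm
  rw [h1, Fintype.card_congr e, Fintype.card_fun, Fintype.card_coe, Finset.card_compl]

theorem card_functions_with_monochromatic_rectangle_le
    (n a b : ℕ) (ha : 1 ≤ a) (ha' : a ≤ 2 ^ n) (hb : 1 ≤ b) (hb' : b ≤ 2 ^ n) :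
    Nat.card {f : (Fin n → Bool) × (Fin n → Bool) → Bool //
      ∃ X Y : Finset (Fin n → Bool), ∃ c : Bool,
        X.card = a ∧ Y.card = b ∧ ∀ x ∈ X, ∀ y ∈ Y, f (x, y) = c} ≤
      2 * (2 ^ n).choose a * (2 ^ n).choose b * 2 ^ (2 ^ (2 * n) - a * b) := by
  classical
  set σ := Fin n → Bool
  set F := σ × σ → Bool
  have hσ : Fintype.card σ = 2 ^ n := by simp [σ, Fintype.card_fun]
  have hσσ : Fintype.card (σ × σ) = 2 ^ (2 * n) := by
    rw [Fintype.card_prod, hσ, ← pow_add, two_mul]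
  set P : F → Prop := fun f => ∃ X Y : Finset σ, ∃ c : Bool,
      X.card = a ∧ Y.card = b ∧ ∀ x ∈ X, ∀ y ∈ Y, f (x, y) = c with hP
  haveI : DecidablePred P := Classical.decPred P
  have h0 : Nat.card {f : F // P f} = (Finset.univ.filter P).card := by
    rw [Nat.card_eq_fintype_card, Fintype.card_subtype]
  rw [h0]
  set T : Finset (Bool × Finset σ × Finset σ) :=
    Finset.univ ×ˢ (Finset.univ.powersetCard a ×ˢ Finset.univ.powersetCard b) with hT
  have hsub : (Finset.univ.filter P) ⊆
      T.biUnion (fun t => Finset.univ.filter fun f : F =>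
        ∀ p ∈ t.2.1 ×ˢ t.2.2, f p = t.1) := by
    intro f hf
    obtain ⟨X, Y, c, hX, hY, hfc⟩ := (Finset.mem_filter.mp hf).2
    refine Finset.mem_biUnion.mpr ⟨(c, X, Y), ?_, ?_⟩
    · simp [hT, Finset.mem_powersetCard, hX, hY]
    · simp only [Finset.mem_filter, Finset.mem_univ, true_and]
      rintro ⟨x, y⟩ hp
      rw [Finset.mem_product] at hp
      exact hfc x hp.1 y hp.2
  calc (Finset.univ.filter P).card
      ≤ ∑ t ∈ T, (Finset.univ.filter fun f : F =>
          ∀ p ∈ t.2.1 ×ˢ t.2.2, f p = t.1).card :=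
        le_trans (Finset.card_le_card hsub) (Finset.card_biUnion_le)
    _ ≤ ∑ t ∈ T, 2 ^ (2 ^ (2 * n) - a * b) := by
        apply Finset.sum_le_sum
        rintro ⟨c, X, Y⟩ ht
        simp only [hT, Finset.mem_product, Finset.mem_powersetCard, Finset.mem_univ,
          true_and] at ht
        have := card_funs_fixed_on (X ×ˢ Y) (fun _ => c)
        rw [this, hσσ, Finset.card_product, ht.1.2, ht.2.2]
        simp
    _ = T.card * 2 ^ (2 ^ (2 * n) - a * b) := by rw [Finset.sum_const, smul_eq_mul]
    _ = 2 * (2 ^ n).choose a * (2 ^ n).choose b * 2 ^ (2 ^ (2 * n) - a * b) := by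
        have : T.card = 2 * (2 ^ n).choose a * (2 ^ n).choose b := by
          simp [hT, Finset.card_powersetCard, hσ]; ring
        rw [this]
  all_goals exact le_rfl
end

section
/- Let n ≥ 1 and let a, b be natural numbers with 3*n ≤ a and a ≤ b and b ≤ 2^n. Then the number of functions f : (Fin n → Bool) × (Fin n → Bool) → Bool having a monochromatic rectangle of dimensions a × b (i.e., there exist Finsets X, Y with X.card = a, Y.card = b and a constant c : Bool with f (x, y) = c for all x ∈ X, y ∈ Y) is strictly less than 2^(2^(2*n) − n). -/
theorem card_functions_with_large_monochromatic_rectangle_lt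
    (n a b : ℕ) (hn : 1 ≤ n) (ha : 3 * n ≤ a) (hab : a ≤ b) (hb : b ≤ 2 ^ n) :
    Nat.card {f : (Fin n → Bool) × (Fin n → Bool) → Bool //
      ∃ X Y : Finset (Fin n → Bool), ∃ c : Bool,
        X.card = a ∧ Y.card = b ∧ ∀ x ∈ X, ∀ y ∈ Y, f (x, y) = c} <
      2 ^ (2 ^ (2 * n) - n) := by
  classical
  set α := (Fin n → Bool) × (Fin n → Bool) with hαdef
  have hα : Fintype.card α = 2 ^ (2 * n) := by
    simp [hαdef, two_mul, pow_add]
  haveI : Fintype {f : α → Bool //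
      ∃ X Y : Finset (Fin n → Bool), ∃ c : Bool,
        X.card = a ∧ Y.card = b ∧ ∀ x ∈ X, ∀ y ∈ Y, f (x, y) = c} :=
    Fintype.ofFinite _
  rw [Nat.card_eq_fintype_card,
    Fintype.card_of_subtype (Finset.univ.filter (fun f : α → Bool =>
      ∃ X Y : Finset (Fin n → Bool), ∃ c : Bool,
        X.card = a ∧ Y.card = b ∧ ∀ x ∈ X, ∀ y ∈ Y, f (x, y) = c))
      (by intro x; simp)]
  set T : Finset (Finset (Fin n → Bool) × Finset (Fin n → Bool) × Bool) :=
    (Finset.univ.powersetCard a) ×ˢ (Finset.univ.powersetCard b) ×ˢ Finset.univ with hT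
  -- each piece has at most 2 ^ (2 ^ (2 * n) - a * b) elements
  have hpiece : ∀ t ∈ T,
      (Finset.univ.filter (fun f : α → Bool =>
        ∀ x ∈ t.1, ∀ y ∈ t.2.1, f (x, y) = t.2.2)).card ≤ 2 ^ (2 ^ (2 * n) - a * b) := by
    rintro ⟨X, Y, c⟩ ht
    simp only [hT, Finset.mem_product, Finset.mem_powersetCard, Finset.mem_univ,
      and_true] at ht
    obtain ⟨⟨-, hXa⟩, -, hYb⟩ := ht
    set R : Finset α := X ×ˢ Y with hR
    have hRcard : R.card = a * b := by rw [hR, Finset.card_product, hXa, hYb]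
    have hRle : R.card ≤ Fintype.card α := R.card_le_univ.trans (by simp)
    calc (Finset.univ.filter (fun f : α → Bool =>
            ∀ x ∈ X, ∀ y ∈ Y, f (x, y) = c)).card
        ≤ Fintype.card ({z : α // z ∉ R} → Bool) := by
          apply Finset.card_le_card_of_injOn
            (fun f => (fun z : {z : α // z ∉ R} => f z.1))
          · intro f _; exact Finset.mem_univ _
          · intro f hf g hg hfg
            simp only [Finset.mem_coe, Finset.mem_filter] at hf hg
            funext z
            by_cases hz : z ∈ R
            · obtain ⟨x, y⟩ := z
              rw [hR, Finset.mem_product] at hz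
              rw [hf.2 x hz.1 y hz.2, hg.2 x hz.1 y hz.2]
            · exact congrFun hfg ⟨z, hz⟩
      _ = 2 ^ (2 ^ (2 * n) - a * b) := by
          rw [Fintype.card_fun, Fintype.card_bool]
          congr 1
          rw [← hRcard, ← hα]
          have : Fintype.card {z : α // z ∉ R} =
              Fintype.card α - Fintype.card {z : α // z ∈ R} :=
            Fintype.card_subtype_compl _
          rw [this]
          congr 1
          exact (Fintype.card_congr (Equiv.refl _)).trans (Fintype.card_coe R)
    -- close the Finset.card filter goal in the calc start
  -- the set of bad functions is covered by the biUnion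
  have hsub : Finset.univ.filter (fun f : α → Bool =>
      ∃ X Y : Finset (Fin n → Bool), ∃ c : Bool,
        X.card = a ∧ Y.card = b ∧ ∀ x ∈ X, ∀ y ∈ Y, f (x, y) = c) ⊆
      T.biUnion (fun t => Finset.univ.filter (fun f : α → Bool =>
        ∀ x ∈ t.1, ∀ y ∈ t.2.1, f (x, y) = t.2.2)) := by
    intro f hf
    simp only [Finset.mem_filter, Finset.mem_univ, true_and] at hf
    obtain ⟨X, Y, c, hXa, hYb, hmono⟩ := hf
    refine Finset.mem_biUnion.2 ⟨⟨X, Y, c⟩, ?_, ?_⟩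
    · simp [hT, Finset.mem_powersetCard, hXa, hYb]
    · simp only [Finset.mem_filter, Finset.mem_univ, true_and]
      exact hmono
  have hTcard : T.card = (2 ^ n).choose a * ((2 ^ n).choose b * 2) := by
    simp [hT, Finset.card_powersetCard]
  have key : n * a + n * b + n + 2 ≤ a * b := by
    have h1 : 3 * n * b ≤ a * b := Nat.mul_le_mul_right b ha
    have h2 : n * a ≤ n * b := Nat.mul_le_mul_left n hab
    have h3 : n * (3 * n) ≤ n * b := Nat.mul_le_mul_left n (ha.trans hab)
    nlinarith [hn, h1, h2, h3]
  have hab2 : a * b ≤ 2 ^ (2 * n) := by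
    calc a * b ≤ 2 ^ n * 2 ^ n := Nat.mul_le_mul (hab.trans hb) hb
      _ = 2 ^ (2 * n) := by rw [two_mul, pow_add]
  calc (Finset.univ.filter _).card
      ≤ (T.biUnion (fun t => Finset.univ.filter (fun f : α → Bool =>
          ∀ x ∈ t.1, ∀ y ∈ t.2.1, f (x, y) = t.2.2))).card :=
        Finset.card_le_card hsub
    _ ≤ ∑ t ∈ T, (Finset.univ.filter (fun f : α → Bool =>
          ∀ x ∈ t.1, ∀ y ∈ t.2.1, f (x, y) = t.2.2)).card :=
        Finset.card_biUnion_le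
    _ ≤ T.card * 2 ^ (2 ^ (2 * n) - a * b) := by
        rw [← smul_eq_mul]
        exact Finset.sum_le_card_nsmul _ _ _ hpiece
    _ ≤ (2 ^ (n * a)) * (2 ^ (n * b) * 2) * 2 ^ (2 ^ (2 * n) - a * b) := by
        rw [hTcard]
        have c1 : (2 ^ n).choose a ≤ 2 ^ (n * a) := by
          calc (2 ^ n).choose a ≤ (2 ^ n) ^ a := Nat.choose_le_pow _ _
            _ = 2 ^ (n * a) := by rw [← pow_mul]
        have c2 : (2 ^ n).choose b ≤ 2 ^ (n * b) := by
          calc (2 ^ n).choose b ≤ (2 ^ n) ^ b := Nat.choose_le_pow _ _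
            _ = 2 ^ (n * b) := by rw [← pow_mul]
        exact Nat.mul_le_mul (Nat.mul_le_mul c1 (Nat.mul_le_mul_right 2 c2)) le_rfl
    _ = 2 ^ (n * a + (n * b + 1) + (2 ^ (2 * n) - a * b)) := by
        rw [pow_add, pow_add, pow_add, pow_one]
    _ < 2 ^ (2 ^ (2 * n) - n) := by
        apply Nat.pow_lt_pow_right one_lt_two
        omega
end
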